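/- Let X be a complex Banach space and L(X) the Banach algebra of bounded linear operators on X. If A, D ∈ L(X) have Hirano inverses, then for any C ∈ L(X) the lower-triangular operator matrix M = [[A, 0], [C, D]] has a Hirano inverse in M₂(L(X)). -/

import Mathlib

/-!
In any ring, `a` has a Hirano inverse exactly when `a - a³` is nilpotent. Both conditions can be
tested in a commutative subring (generated by `a`, or by `a` and a Hirano inverse). There
`(a - a³)²` is a multiple of `a² - az`; conversely, if `a - a³` is nilpotent then `a²` is
idempotent modulo the nilradical, this idempotent lifts to some `e`, and
`z = a e (1 - e + e a²)⁻¹` is a Hirano inverse of `a`.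

For the lower-triangular `M`, `M - M³` is again lower triangular with diagonal entries
`A - A³` and `D - D³`, and a lower-triangular matrix with nilpotent diagonal is nilpotent.
-/

/-- `a` has a Hirano inverse: there exists `z` with `az = za`, `z = zaz`,
and `a^2 - az` nilpotent. -/
def HasHiranoInverse {R : Type*} [Ring R] (a : R) : Prop :=
  ∃ z : R, a * z = z * a ∧ z = z * a * z ∧ IsNilpotent (a ^ 2 - a * z)

/-- `a` has a strongly Drazin inverse: there exists `z` with `az = za`, `z = zaz`,
and `a - az` nilpotent. -/
def HasStronglyDrazinInverse {R : Type*} [Ring R] (a : R) : Prop :=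
  ∃ z : R, a * z = z * a ∧ z = z * a * z ∧ IsNilpotent (a - a * z)

theorem HasHiranoInverse.map {R S F : Type*} [Ring R] [Ring S] [FunLike F R S]
    [RingHomClass F R S] (f : F) {a : R} (h : HasHiranoInverse a) : HasHiranoInverse (f a) := by
  obtain ⟨z, hcomm, hz, hnil⟩ := h
  refine ⟨f z, by rw [← map_mul, hcomm, map_mul], by rw [← map_mul, ← map_mul, ← hz], ?_⟩
  simpa using hnil.map f

section CommRing

variable {S : Type*} [CommRing S]

theorem exists_isIdempotentElem_isNilpotent_sub {b : S} (h : IsNilpotent (b - b ^ 2)) :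
    ∃ e : S, IsIdempotentElem e ∧ IsNilpotent (b - e) := by
  let π := Ideal.Quotient.mk (nilradical S)
  have hπ : IsIdempotentElem (π b) := by
    rw [IsIdempotentElem, eq_comm, ← sub_eq_zero, ← sq, ← map_pow, ← map_sub,
      Ideal.Quotient.eq_zero_iff_mem, mem_nilradical]
    exact h
  obtain ⟨e, he, hπe⟩ := exists_isIdempotentElem_eq_of_ker_isNilpotent π
    (fun x hx ↦ by rwa [Ideal.mk_ker, mem_nilradical] at hx) _ ⟨b, rfl⟩ hπ
  refine ⟨e, he, ?_⟩
  rw [← mem_nilradical, ← Ideal.Quotient.eq]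
  exact hπe.symm

theorem isNilpotent_sub_pow_three_of_isNilpotent_sq_sub_mul {a z : S} (hz : z = z * a * z)
    (hnil : IsNilpotent (a ^ 2 - a * z)) : IsNilpotent (a - a ^ 3) := by
  have hsq : (a - a ^ 3) ^ 2 = (a ^ 2 - a * z) * (a * z * (a ^ 2 - a * z) + (1 - a ^ 2) ^ 2) := by
    linear_combination (a * (1 - a * z - 2 * (a ^ 2 - a * z))) * hz
  exact (hsq ▸ (Commute.all _ _).isNilpotent_mul_right hnil).of_pow

theorem hasHiranoInverse_of_isNilpotent_sub_pow_three_of_commRing {a : S}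
    (h : IsNilpotent (a - a ^ 3)) : HasHiranoInverse a := by
  obtain ⟨e, he, hnil⟩ := exists_isIdempotentElem_isNilpotent_sub (b := a ^ 2) <| by
    rw [show a ^ 2 - (a ^ 2) ^ 2 = a * (a - a ^ 3) by ring]
    exact (Commute.all _ _).isNilpotent_mul_left h
  obtain ⟨v, hv⟩ : ∃ v, (1 - e + e * a ^ 2) * v = 1 := by
    have hu : 1 - e + e * a ^ 2 = 1 + e * (a ^ 2 - e) := by linear_combination he.eq
    rw [hu]
    exact ((Commute.all _ _).isNilpotent_mul_left hnil).isUnit_one_add.exists_right_inv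
  have hae : a ^ 2 * e * v = e := by linear_combination e * hv + (v - a ^ 2 * v) * he.eq
  refine ⟨a * e * v, Commute.all _ _, ?_, ?_⟩
  · linear_combination (-(a * e * v)) * hae - a * v * he.eq
  · rwa [← mul_assoc, ← mul_assoc, ← sq, hae]

end CommRing

section Ring

variable {R : Type*} [Ring R]

open scoped IsMulCommutative in
theorem HasHiranoInverse.isNilpotent_sub_pow_three {a : R} (h : HasHiranoInverse a) :
    IsNilpotent (a - a ^ 3) := by
  obtain ⟨z, hcomm, hz, hnil⟩ := h
  let T := Algebra.adjoin ℤ ({a, z} : Set R)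
  have := Algebra.isMulCommutative_adjoin ℤ (s := {a, z}) <| by
    rintro x (rfl | rfl) y (rfl | rfl) <;> simp only [hcomm]
  let a' : T := ⟨a, Algebra.subset_adjoin (by simp)⟩
  let z' : T := ⟨z, Algebra.subset_adjoin (by simp)⟩
  have hnil' : IsNilpotent (a' ^ 2 - a' * z') :=
    (IsNilpotent.map_iff (f := T.val) Subtype.val_injective).1 hnil
  exact (isNilpotent_sub_pow_three_of_isNilpotent_sq_sub_mul (a := a') (z := z')
    (Subtype.ext hz) hnil').map T.val

theorem hasHiranoInverse_of_isNilpotent_sub_pow_three {a : R} (h : IsNilpotent (a - a ^ 3)) :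
    HasHiranoInverse a := by
  let T := Algebra.adjoin ℤ ({a} : Set R)
  let a' : T := ⟨a, Algebra.self_mem_adjoin_singleton ℤ a⟩
  have h' : IsNilpotent (a' - a' ^ 3) :=
    (IsNilpotent.map_iff (f := T.val) Subtype.val_injective).1 h
  exact (hasHiranoInverse_of_isNilpotent_sub_pow_three_of_commRing h').map T.val

theorem hasHiranoInverse_iff_isNilpotent_sub_pow_three {a : R} :
    HasHiranoInverse a ↔ IsNilpotent (a - a ^ 3) :=
  ⟨HasHiranoInverse.isNilpotent_sub_pow_three, hasHiranoInverse_of_isNilpotent_sub_pow_three⟩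

namespace Matrix

theorem sub_fin_two {α : Type*} [Sub α] (a₁₁ a₁₂ a₂₁ a₂₂ b₁₁ b₁₂ b₂₁ b₂₂ : α) :
    !![a₁₁, a₁₂; a₂₁, a₂₂] - !![b₁₁, b₁₂; b₂₁, b₂₂] =
      !![a₁₁ - b₁₁, a₁₂ - b₁₂; a₂₁ - b₂₁, a₂₂ - b₂₂] := by
  ext i j
  fin_cases i <;> fin_cases j <;> rfl

theorem exists_pow_lowerTriangular_eq (x c y : R) (k : ℕ) :
    ∃ d : R, !![x, 0; c, y] ^ k = !![x ^ k, 0; d, y ^ k] := by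
  induction k with
  | zero => exact ⟨0, by simp [one_fin_two]⟩
  | succ k ih =>
    obtain ⟨d, hd⟩ := ih
    exact ⟨d * x + y ^ k * c, by simp [pow_succ, hd]⟩

theorem isNilpotent_lowerTriangular {x y : R} (hx : IsNilpotent x) (hy : IsNilpotent y) (c : R) :
    IsNilpotent !![x, 0; c, y] := by
  obtain ⟨p, hp⟩ := hx
  obtain ⟨q, hq⟩ := hy
  obtain ⟨d, hd⟩ := exists_pow_lowerTriangular_eq x c y p
  obtain ⟨d', hd'⟩ := exists_pow_lowerTriangular_eq x c y q
  -- `M ^ q` has zero second column and `M ^ p` has zero first row.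
  refine ⟨q + p, ?_⟩
  rw [pow_add, hd', hd, hp, hq, mul_fin_two]
  simpa using (eta_fin_two (0 : Matrix (Fin 2) (Fin 2) R)).symm

end Matrix

end Ring

variable {X : Type*} [NormedAddCommGroup X] [NormedSpace ℂ X] [CompleteSpace X]

theorem hirano_triangular (A D : X →L[ℂ] X)
    (hA : HasHiranoInverse A) (hD : HasHiranoInverse D) (C : X →L[ℂ] X) :
    HasHiranoInverse (!![A, 0; C, D] : Matrix (Fin 2) (Fin 2) (X →L[ℂ] X)) := by
  rw [hasHiranoInverse_iff_isNilpotent_sub_pow_three] at hA hD ⊢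
  obtain ⟨d, hd⟩ := Matrix.exists_pow_lowerTriangular_eq A C D 3
  rw [hd, Matrix.sub_fin_two, sub_zero]
  exact Matrix.isNilpotent_lowerTriangular hA hD (C - d)
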